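/- arXiv:1106.2837 — 3 statements merged into one kernel-verified Lean document; each statement's English description precedes it below -/
import Mathlib

section
/- For any natural number m, the number of indices n with 0 ≤ n ≤ m such that the binomial coefficient C(m, n) is odd equals 2^{N(m)}, where N(m) is the number of ones in the binary representation of m. -/
/-!
By Lucas's theorem for `p = 2`, `C(m, n)` is odd iff `C(m / 2, n / 2)` is odd and the last
binary digit of `n` does not exceed that of `m`. So the admissible `n` are exactly `2 k + d` with
`k` admissible for `m / 2` and `d ≤ m % 2`: stripping off the last binary digit of `m` divides
their number by `m % 2 + 1`, just as it divides `2 ^ N(m)`.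
-/

open Finset

namespace Nat

def oddChooseIndices (m : ℕ) : Finset ℕ :=
  (range (m + 1)).filter fun n => Odd (m.choose n)

theorem mem_oddChooseIndices {m n : ℕ} : n ∈ oddChooseIndices m ↔ n ≤ m ∧ Odd (m.choose n) := by
  rw [oddChooseIndices, mem_filter, mem_range, Nat.lt_succ_iff]

theorem odd_choose_iff (m n : ℕ) :
    Odd (m.choose n) ↔ Odd ((m / 2).choose (n / 2)) ∧ n % 2 ≤ m % 2 := by
  have := Fact.mk prime_two
  rw [odd_iff, odd_iff, Choose.choose_modEq_choose_mod_mul_choose_div_nat (p := 2), mul_mod]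
  rcases mod_two_eq_zero_or_one m with hm | hm <;>
    rcases mod_two_eq_zero_or_one n with hn | hn <;> simp [hm, hn]

theorem card_oddChooseIndices_eq_mul (m : ℕ) :
    #(oddChooseIndices m) = #(oddChooseIndices (m / 2)) * (m % 2 + 1) := by
  rw [← card_range (m % 2 + 1), ← card_product]
  refine card_bij' (fun n _ => (n / 2, n % 2)) (fun p _ => 2 * p.1 + p.2) ?_ ?_ ?_ ?_
  · intro n hn
    obtain ⟨hnm, hodd⟩ := mem_oddChooseIndices.mp hn
    rw [odd_choose_iff] at hodd
    exact mem_product.mpr ⟨mem_oddChooseIndices.mpr ⟨by omega, hodd.1⟩, mem_range.mpr (by omega)⟩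
  · rintro ⟨k, d⟩ hkd
    obtain ⟨hk, hd⟩ := mem_product.mp hkd
    obtain ⟨hkm, hodd⟩ := mem_oddChooseIndices.mp hk
    have hd := mem_range.mp hd
    have hdiv : (2 * k + d) / 2 = k := by omega
    have hmod : (2 * k + d) % 2 = d := by omega
    refine mem_oddChooseIndices.mpr ⟨by omega, ?_⟩
    rw [odd_choose_iff, hdiv, hmod]
    exact ⟨hodd, by omega⟩
  · intro n _
    dsimp only
    omega
  · rintro ⟨k, d⟩ hkd
    have hd := mem_range.mp (mem_product.mp hkd).2
    simp only [Prod.mk.injEq]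
    omega

theorem two_pow_count_digits_two_eq_mul {m : ℕ} (hm : 0 < m) :
    2 ^ (digits 2 m).count 1 = 2 ^ (digits 2 (m / 2)).count 1 * (m % 2 + 1) := by
  rw [digits_def' one_lt_two hm, List.count_cons]
  rcases mod_two_eq_zero_or_one m with h | h <;> simp [h, pow_succ]

end Nat

/-- The number of `n` with `0 ≤ n ≤ m` such that `C(m, n)` is odd equals `2 ^ N(m)`,
where `N(m)` is the number of ones in the binary representation of `m`. -/
theorem stmt2 (m : ℕ) :
    ((Finset.range (m + 1)).filter (fun n => Odd (Nat.choose m n))).card =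
      2 ^ ((Nat.digits 2 m).count 1) := by
  change #(Nat.oddChooseIndices m) = _
  induction m using Nat.strong_induction_on with
  | _ m ih =>
    rcases Nat.eq_zero_or_pos m with rfl | hm
    · decide
    rw [Nat.card_oddChooseIndices_eq_mul, Nat.two_pow_count_digits_two_eq_mul hm,
      ih (m / 2) (Nat.div_lt_self hm one_lt_two)]
end

section
/- Let (A_m) be a sequence of d×d complex matrices each with operator norm at most 1. If ∑_{m≥1} (d - ‖A_m‖_{HS}²) < ∞ where ‖·‖_{HS} is the Hilbert–Schmidt norm, then the limit lim_{m→∞} lim_{n→∞} |det(A_n A_{n-1} ⋯ A_m)| exists and is strictly positive; conversely, if that iterated limit is strictly positive then ∑_{m≥1}(d - ‖A_m‖_{HS}²) < ∞. -/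
/-!
Write `λ_i ∈ [0, 1]` for the eigenvalues of `A*A`. Then `|det A|² = ∏ λ_i` and
`d - ‖A‖²_HS = ∑ (1 - λ_i)`, and the elementary bounds `1 - ∏ λ_i ≤ ∑ (1 - λ_i) ≤ d (1 - ∏ λ_i)`
show that `∑ (d - ‖A_m‖²_HS)` and `∑ (1 - |det A_m|)` converge together. Since
`|det (A_n ⋯ A_m)| = ∏_{k=m}^n |det A_k|`, what remains is the classical criterion for products
of numbers `a_k ∈ [0, 1]`: by `1 - ∑ (1 - a_k) ≤ ∏ a_k ≤ exp (-∑ (1 - a_k))`, some tail product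
`∏_{k ≥ m} a_k` is positive if and only if `∑ (1 - a_k) < ∞`.
-/

open Matrix Filter

/-- The product `A_n * A_{n-1} * ⋯ * A_m` of a sequence of `d × d` matrices. -/
noncomputable def matProdDesc {d : ℕ} (A : ℕ → Matrix (Fin d) (Fin d) ℂ) (m n : ℕ) :
    Matrix (Fin d) (Fin d) ℂ :=
  (((List.range' m (n + 1 - m)).reverse).map A).prod

open Finset

namespace Finset

variable {ι : Type*} {x : ι → ℝ}

theorem one_sub_sum_one_sub_le_prod (s : Finset ι) (h0 : ∀ i ∈ s, 0 ≤ x i)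
    (h1 : ∀ i ∈ s, x i ≤ 1) : 1 - ∑ i ∈ s, (1 - x i) ≤ ∏ i ∈ s, x i := by
  classical
  induction s using Finset.induction with
  | empty => simp
  | @insert a s ha ih =>
    rw [sum_insert ha, prod_insert ha]
    have ha0 := h0 a (mem_insert_self a s)
    have ha1 := h1 a (mem_insert_self a s)
    have h0' : ∀ i ∈ s, 0 ≤ x i := fun i hi => h0 i (mem_insert_of_mem hi)
    have h1' : ∀ i ∈ s, x i ≤ 1 := fun i hi => h1 i (mem_insert_of_mem hi)
    have hsum : 0 ≤ ∑ i ∈ s, (1 - x i) := sum_nonneg fun i hi => sub_nonneg.2 (h1' i hi)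
    nlinarith [ih h0' h1', prod_le_one h0' h1']

theorem sum_one_sub_le_card_mul_one_sub_prod (s : Finset ι) (h0 : ∀ i ∈ s, 0 ≤ x i)
    (h1 : ∀ i ∈ s, x i ≤ 1) : ∑ i ∈ s, (1 - x i) ≤ #s * (1 - ∏ i ∈ s, x i) := by
  classical
  have hprod_le : ∀ i ∈ s, ∏ j ∈ s, x j ≤ x i := fun i hi => by
    simpa using prod_le_prod_of_subset_of_le_one (singleton_subset_iff.2 hi) h0
      (fun j hj _ => h1 j hj)
  simpa using sum_le_card_nsmul s _ _ fun i hi => sub_le_sub_left (hprod_le i hi) 1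

theorem prod_le_exp_neg_sum_one_sub (s : Finset ι) (h0 : ∀ i ∈ s, 0 ≤ x i) :
    ∏ i ∈ s, x i ≤ Real.exp (-∑ i ∈ s, (1 - x i)) := by
  rw [← sum_neg_distrib, Real.exp_sum]
  exact prod_le_prod h0 fun i _ => by linarith [Real.add_one_le_exp (-(1 - x i))]

end Finset

section TailProducts

variable {a : ℕ → ℝ}

theorem antitone_prod_Ico_succ (h0 : ∀ k, 0 ≤ a k) (h1 : ∀ k, a k ≤ 1) (m : ℕ) :
    Antitone fun n => ∏ k ∈ Ico m (n + 1), a k :=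
  (prod_anti_set_of_le_one h0 h1).comp_monotone fun _ _ h => Ico_subset_Ico_right (by omega)

theorem monotone_prod_Ico_succ (h0 : ∀ k, 0 ≤ a k) (h1 : ∀ k, a k ≤ 1) (n : ℕ) :
    Monotone fun m => ∏ k ∈ Ico m (n + 1), a k :=
  (prod_anti_set_of_le_one h0 h1).comp fun _ _ h => Ico_subset_Ico_left h

theorem sum_Ico_le_tsum_nat_add {g : ℕ → ℝ} (hg : Summable g) (h0 : ∀ k, 0 ≤ g k) (M N : ℕ) :
    ∑ k ∈ Ico M N, g k ≤ ∑' k, g (k + M) := by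
  rw [sum_Ico_eq_sum_range]
  simp_rw [add_comm M]
  exact ((summable_nat_add_iff M).2 hg).sum_le_tsum _ fun k _ => h0 _

theorem exists_half_le_prod_Ico_of_summable (h0 : ∀ k, 0 ≤ a k) (h1 : ∀ k, a k ≤ 1)
    (hs : Summable fun k => 1 - a k) : ∃ M, ∀ n, 1 / 2 ≤ ∏ k ∈ Ico M (n + 1), a k := by
  obtain ⟨M, hM⟩ := ((tendsto_sum_nat_add fun k => 1 - a k).eventually
    (gt_mem_nhds (by norm_num : (0 : ℝ) < 1 / 2))).exists
  refine ⟨M, fun n => ?_⟩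
  have := sum_Ico_le_tsum_nat_add hs (fun k => sub_nonneg.2 (h1 k)) M (n + 1)
  linarith [one_sub_sum_one_sub_le_prod (Ico M (n + 1)) (fun k _ => h0 k) fun k _ => h1 k]

theorem summable_one_sub_of_le_prod_Ico (h0 : ∀ k, 0 ≤ a k) (h1 : ∀ k, a k ≤ 1) {m : ℕ}
    {c : ℝ} (hc : 0 < c) (h : ∀ n, c ≤ ∏ k ∈ Ico m (n + 1), a k) :
    Summable fun k => 1 - a k := by
  rw [← summable_nat_add_iff m]
  refine summable_of_sum_range_le (c := -Real.log c) (fun k => sub_nonneg.2 (h1 _)) fun N => ?_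
  have hsub : ∑ k ∈ range N, (1 - a (k + m)) ≤ ∑ k ∈ Ico m (N + m + 1), (1 - a k) := by
    rw [range_eq_Ico, sum_Ico_add' (fun k => 1 - a k), zero_add]
    exact sum_le_sum_of_subset_of_nonneg (Ico_subset_Ico_right (by omega))
      fun k _ _ => sub_nonneg.2 (h1 k)
  have hexp : c ≤ Real.exp (-∑ k ∈ Ico m (N + m + 1), (1 - a k)) :=
    (h (N + m)).trans (prod_le_exp_neg_sum_one_sub _ fun k _ => h0 k)
  linarith [(Real.log_le_iff_le_exp hc).2 hexp]

theorem summable_one_sub_iff_tendsto_tendsto_prod_Ico (h0 : ∀ k, 0 ≤ a k)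
    (h1 : ∀ k, a k ≤ 1) :
    Summable (fun k => 1 - a k) ↔ ∃ f : ℕ → ℝ,
      (∀ m, Tendsto (fun n => ∏ k ∈ Ico m (n + 1), a k) atTop (nhds (f m))) ∧
        ∃ L : ℝ, 0 < L ∧ Tendsto f atTop (nhds L) := by
  have hbdd : ∀ m, BddBelow (Set.range fun n => ∏ k ∈ Ico m (n + 1), a k) :=
    fun m => ⟨0, Set.forall_mem_range.2 fun n => prod_nonneg fun k _ => h0 k⟩
  constructor
  · intro hs
    obtain ⟨M, hM⟩ := exists_half_le_prod_Ico_of_summable h0 h1 hs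
    set f : ℕ → ℝ := fun m => ⨅ n, ∏ k ∈ Ico m (n + 1), a k
    have hf_mono : Monotone f := fun m m' h =>
      ciInf_mono (hbdd m) fun n => monotone_prod_Ico_succ h0 h1 n h
    have hf_bdd : BddAbove (Set.range f) := ⟨1, Set.forall_mem_range.2 fun m =>
      (ciInf_le (hbdd m) 0).trans (prod_le_one (fun k _ => h0 k) fun k _ => h1 k)⟩
    refine ⟨f, fun m => tendsto_atTop_ciInf (antitone_prod_Ico_succ h0 h1 m) (hbdd m),
      ⨆ m, f m, ?_, tendsto_atTop_ciSup hf_mono hf_bdd⟩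
    calc (0 : ℝ) < 1 / 2 := by norm_num
      _ ≤ f M := le_ciInf hM
      _ ≤ ⨆ m, f m := le_ciSup hf_bdd M
  · rintro ⟨f, hf, L, hL, hfL⟩
    obtain ⟨m, hm⟩ := (hfL.eventually (lt_mem_nhds (half_lt_self hL))).exists
    exact summable_one_sub_of_le_prod_Ico h0 h1 ((half_pos hL).trans hm)
      fun n => (antitone_prod_Ico_succ h0 h1 m).le_of_tendsto (hf m) n

end TailProducts

namespace Matrix

open scoped ComplexOrder

variable {n : Type*} [Fintype n] [DecidableEq n]

open scoped Matrix.Norms.L2Operator in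
theorem eigenvalues_conjTranspose_mul_self_le_one {A : Matrix n n ℂ}
    (hA : ‖toEuclideanCLM (𝕜 := ℂ) A‖ ≤ 1) (i : n) :
    (isHermitian_conjTranspose_mul_self A).eigenvalues i ≤ 1 := by
  -- the spectrum bound needs `NormOneClass`, i.e. a nonempty index type
  have : Nonempty n := ⟨i⟩
  have hmem := (isHermitian_conjTranspose_mul_self A).spectrum_real_eq_range_eigenvalues ▸
    Set.mem_range_self i
  have hnorm := spectrum.norm_le_norm_of_mem ((spectrum.algebraMap_mem_iff ℂ).2 hmem)
  rw [l2_opNorm_conjTranspose_mul_self, cstar_norm_def, Complex.coe_algebraMap,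
    Complex.norm_real, Real.norm_eq_abs] at hnorm
  exact (le_abs_self _).trans (hnorm.trans (mul_le_one₀ hA (norm_nonneg _) hA))

theorem norm_det_sq_eq_prod_eigenvalues (A : Matrix n n ℂ) :
    ‖A.det‖ ^ 2 = ∏ i, (isHermitian_conjTranspose_mul_self A).eigenvalues i := by
  have h := (isHermitian_conjTranspose_mul_self A).det_eq_prod_eigenvalues
  rw [det_mul, det_conjTranspose, RCLike.star_def, Complex.conj_mul'] at h
  exact RCLike.ofReal_injective (by push_cast; exact h)

theorem card_sub_re_trace_conjTranspose_mul_self (A : Matrix n n ℂ) :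
    (Fintype.card n : ℝ) - (Aᴴ * A).trace.re =
      ∑ i, (1 - (isHermitian_conjTranspose_mul_self A).eigenvalues i) := by
  simp [(isHermitian_conjTranspose_mul_self A).trace_eq_sum_eigenvalues, sum_sub_distrib]

theorem norm_det_le_one_of_norm_toEuclideanCLM_le_one {A : Matrix n n ℂ}
    (hA : ‖toEuclideanCLM (𝕜 := ℂ) A‖ ≤ 1) : ‖A.det‖ ≤ 1 := by
  have hsq : ‖A.det‖ ^ 2 ≤ 1 := norm_det_sq_eq_prod_eigenvalues A ▸
    prod_le_one (fun i _ => (posSemidef_conjTranspose_mul_self A).eigenvalues_nonneg i)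
      fun i _ => eigenvalues_conjTranspose_mul_self_le_one hA i
  exact (pow_le_one_iff_of_nonneg (norm_nonneg _) two_ne_zero).1 hsq

theorem one_sub_norm_det_sq_le_card_sub_re_trace {A : Matrix n n ℂ}
    (hA : ‖toEuclideanCLM (𝕜 := ℂ) A‖ ≤ 1) :
    1 - ‖A.det‖ ^ 2 ≤ (Fintype.card n : ℝ) - (Aᴴ * A).trace.re := by
  rw [norm_det_sq_eq_prod_eigenvalues, card_sub_re_trace_conjTranspose_mul_self]
  linarith [one_sub_sum_one_sub_le_prod univ
    (fun i _ => (posSemidef_conjTranspose_mul_self A).eigenvalues_nonneg i)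
    fun i _ => eigenvalues_conjTranspose_mul_self_le_one hA i]

theorem card_sub_re_trace_le_card_mul_one_sub_norm_det_sq {A : Matrix n n ℂ}
    (hA : ‖toEuclideanCLM (𝕜 := ℂ) A‖ ≤ 1) :
    (Fintype.card n : ℝ) - (Aᴴ * A).trace.re ≤ Fintype.card n * (1 - ‖A.det‖ ^ 2) := by
  rw [norm_det_sq_eq_prod_eigenvalues, card_sub_re_trace_conjTranspose_mul_self]
  exact sum_one_sub_le_card_mul_one_sub_prod univ
    (fun i _ => (posSemidef_conjTranspose_mul_self A).eigenvalues_nonneg i)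
    fun i _ => eigenvalues_conjTranspose_mul_self_le_one hA i

theorem summable_card_sub_re_trace_iff_summable_one_sub_norm_det {A : ℕ → Matrix n n ℂ}
    (hA : ∀ m, ‖toEuclideanCLM (𝕜 := ℂ) (A m)‖ ≤ 1) :
    Summable (fun m => (Fintype.card n : ℝ) - ((A m)ᴴ * A m).trace.re) ↔
      Summable fun m => 1 - ‖(A m).det‖ := by
  have h0 : ∀ m, 0 ≤ ‖(A m).det‖ := fun m => norm_nonneg _
  have h1 : ∀ m, ‖(A m).det‖ ≤ 1 := fun m => norm_det_le_one_of_norm_toEuclideanCLM_le_one (hA m)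
  have hlow := fun m => one_sub_norm_det_sq_le_card_sub_re_trace (hA m)
  have hup := fun m => card_sub_re_trace_le_card_mul_one_sub_norm_det_sq (hA m)
  -- `1 - a ≤ 1 - a² ≤ 2 (1 - a)` for `a ∈ [0, 1]`
  constructor
  · intro hs
    exact hs.of_nonneg_of_le (fun m => sub_nonneg.2 (h1 m))
      fun m => by nlinarith [hlow m, h0 m, h1 m]
  · intro hs
    refine (hs.mul_left (2 * (Fintype.card n : ℝ))).of_nonneg_of_le
      (fun m => by nlinarith [hlow m, h0 m, h1 m]) fun m => (hup m).trans ?_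
    have hcard : (0 : ℝ) ≤ Fintype.card n := Nat.cast_nonneg _
    nlinarith [mul_nonneg hcard (mul_nonneg (sub_nonneg.2 (h1 m)) (sub_nonneg.2 (h1 m)))]

end Matrix

theorem norm_det_matProdDesc {d : ℕ} (A : ℕ → Matrix (Fin d) (Fin d) ℂ) (m n : ℕ) :
    ‖(matProdDesc A m n).det‖ = ∏ k ∈ Ico m (n + 1), ‖(A k).det‖ := by
  let normDet : Matrix (Fin d) (Fin d) ℂ →* ℝ :=
    (normHom : ℂ →*₀ ℝ).toMonoidHom.comp detMonoidHom
  change normDet (matProdDesc A m n) = _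
  rw [matProdDesc, map_list_prod, List.map_map, List.map_reverse, List.prod_reverse,
    Nat.Ico_eq_range']
  rfl

/-- Let `(A_m)` be `d × d` complex matrices of operator norm at most `1`.  Then
`∑_m (d - ‖A_m‖_HS²) < ∞` if and only if the iterated limit
`lim_m lim_n |det (A_n ⋯ A_m)|` exists and is strictly positive. -/
theorem stmt8 (d : ℕ) (A : ℕ → Matrix (Fin d) (Fin d) ℂ)
    (hA : ∀ m, ‖Matrix.toEuclideanCLM (𝕜 := ℂ) (A m)‖ ≤ 1) :
    Summable (fun m => (d : ℝ) - (Matrix.trace ((A m)ᴴ * A m)).re) ↔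
      ∃ f : ℕ → ℝ,
        (∀ m, Tendsto (fun n => ‖(matProdDesc A m n).det‖) atTop (nhds (f m))) ∧
        ∃ L : ℝ, 0 < L ∧ Tendsto f atTop (nhds L) := by
  have hsummable := summable_card_sub_re_trace_iff_summable_one_sub_norm_det hA
  rw [Fintype.card_fin] at hsummable
  simp only [hsummable, norm_det_matProdDesc]
  exact summable_one_sub_iff_tendsto_tendsto_prod_Ico (fun k => norm_nonneg _)
    fun k => norm_det_le_one_of_norm_toEuclideanCLM_le_one (hA k)
end

section
/- Let Γ be a compact abelian group, and for each k ∈ ℕ let G_k = Γ^k with homomorphism φ_k : Γ^{k+1} → Γ^k given by φ_k(g_1, …, g_{k+1}) = (g_1 + g_2, g_2 + g_3, …, g_k + g_{k+1}). Then the projective limit H = { (h^{(k)})_{k∈ℕ} : h^{(k)} ∈ Γ^k, φ_k(h^{(k+1)}) = h^{(k)} } is isomorphic as a topological group to the countable product Γ^ℕ. -/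
/-!
Write `h k i` for the `i`-th coordinate (from `0`) of `h^{(k)}`. Read as
`h (k+1) i = h k i - h (k+1) (i+1)`, compatibility determines each level from the level below and
its own last coordinate. Indexing by the distance `d = k - 1 - i` to the last coordinate, this
recursion becomes `(1 - S)^(d+1) = (1 - S) ∘ (1 - S)^d`, with `S` the left shift on `ℕ → Γ`; so
`h k i = ((1 - S)^d b) i`, where `b k = h (k+1) k` is the free sequence of last coordinates.
Both `h ↦ b` and `b ↦ h` are continuous, each coordinate of `(1 - S)^d b` being a finite signed
sum of coordinates of `b`.
-/

/-- The projective limit of the system `G_k = Γ^k` with maps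
`φ_k(g_1, …, g_{k+1}) = (g_1 + g_2, …, g_k + g_{k+1})`, as an additive subgroup of
`∏ k, (Fin k → Γ)`. -/
def projLimH (Γ : Type*) [AddCommGroup Γ] : AddSubgroup (∀ k : ℕ, Fin k → Γ) where
  carrier := {h | ∀ (k : ℕ) (i : Fin k), h k i = h (k + 1) i.castSucc + h (k + 1) i.succ}
  zero_mem' := by intro k i; simp
  add_mem' := by
    intro x y hx hy k i
    simp only [Pi.add_apply, hx k i, hy k i]
    abel
  neg_mem' := by
    intro x hx k i
    simp only [Pi.neg_apply, hx k i]
    abel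

section

variable {Γ : Type*} [AddCommGroup Γ]

def shiftSub (f : ℕ → Γ) : ℕ → Γ := fun i => f i - f (i + 1)

namespace projLimH

def ofLast (b : ℕ → Γ) : ∀ k, Fin k → Γ := fun k i => shiftSub^[k - 1 - i] b i

theorem ofLast_mem (b : ℕ → Γ) : ofLast b ∈ projLimH Γ := by
  intro k i
  have hi := i.isLt
  simp only [ofLast, Fin.val_castSucc, Fin.val_succ]
  rw [show k + 1 - 1 - i = (k - 1 - i) + 1 by omega, show k + 1 - 1 - (i + 1) = k - 1 - i by omega,
    Function.iterate_succ_apply', shiftSub, sub_add_cancel]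

theorem ofLast_last (b : ℕ → Γ) (k : ℕ) : ofLast b (k + 1) (Fin.last k) = b k := by
  simp [ofLast]

theorem eq_zero_of_last_eq_zero {h : ∀ k, Fin k → Γ} (hh : h ∈ projLimH Γ)
    (hlast : ∀ k, h (k + 1) (Fin.last k) = 0) : h = 0 := by
  have key : ∀ d n i (hi : i < n), n = i + d + 1 → h n ⟨i, hi⟩ = 0 := by
    intro d
    induction d with
    | zero =>
      rintro n i hi rfl
      exact hlast i
    | succ d ih =>
      rintro n i hi rfl
      have hbelow := ih (i + d + 1) i (by omega) rfl
      have hright := ih (i + d + 2) (i + 1) (by omega) (by omega)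
      have hcompat := hh (i + d + 1) ⟨i, by omega⟩
      rw [Fin.castSucc_mk, Fin.succ_mk, hbelow, hright, add_zero] at hcompat
      exact hcompat.symm
  funext n i
  exact key (n - 1 - i) n i i.isLt (by omega)

def lastEquiv : projLimH Γ ≃+ (ℕ → Γ) where
  toFun h k := h.1 (k + 1) (Fin.last k)
  invFun b := ⟨ofLast b, ofLast_mem b⟩
  left_inv h := by
    refine Subtype.ext (sub_eq_zero.1 (eq_zero_of_last_eq_zero
      (sub_mem (ofLast_mem _) h.2) fun k => ?_))
    simp [ofLast_last]
  right_inv b := funext (ofLast_last b)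
  map_add' _ _ := rfl

variable [TopologicalSpace Γ]

theorem continuous_lastEquiv : Continuous (lastEquiv : projLimH Γ → ℕ → Γ) :=
  continuous_pi fun k =>
    (continuous_apply (Fin.last k)).comp ((continuous_apply (k + 1)).comp continuous_subtype_val)

variable [IsTopologicalAddGroup Γ]

theorem continuous_shiftSub : Continuous (shiftSub : (ℕ → Γ) → ℕ → Γ) :=
  continuous_pi fun i => (continuous_apply i).sub (continuous_apply (i + 1))

theorem continuous_ofLast : Continuous (ofLast : (ℕ → Γ) → ∀ k, Fin k → Γ) :=
  continuous_pi fun k => continuous_pi fun i =>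
    (continuous_apply (i : ℕ)).comp (continuous_shiftSub.iterate (k - 1 - i))

theorem continuous_lastEquiv_symm : Continuous (lastEquiv.symm : (ℕ → Γ) → projLimH Γ) :=
  continuous_ofLast.subtype_mk ofLast_mem

end projLimH

end

theorem stmt14_general (Γ : Type*) [AddCommGroup Γ] [TopologicalSpace Γ]
    [IsTopologicalAddGroup Γ] :
    ∃ e : projLimH Γ ≃+ (ℕ → Γ), Continuous e ∧ Continuous e.symm :=
  ⟨projLimH.lastEquiv, projLimH.continuous_lastEquiv, projLimH.continuous_lastEquiv_symm⟩

/-- For a compact abelian group `Γ`, the projective limit of the system `(Γ^k, φ_k)` with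
`φ_k(g_1, …, g_{k+1}) = (g_1 + g_2, …, g_k + g_{k+1})` is isomorphic as a topological group
to the countable product `Γ^ℕ`. -/
theorem stmt14 (Γ : Type*) [AddCommGroup Γ] [TopologicalSpace Γ]
    [IsTopologicalAddGroup Γ] [CompactSpace Γ] :
    ∃ e : projLimH Γ ≃+ (ℕ → Γ), Continuous e ∧ Continuous e.symm :=
  stmt14_general Γ
end
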